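/- arXiv:2603.03019 — 6 statements merged into one kernel-verified Lean document; each statement's English description precedes it below -/
import Mathlib

section
/- (Proposition 1, Reformulation of the zero-capacity hypercube model.) Let (p_n)_{n=0}^{N} be a solution of the conditional probability formulation with p_n(m) ≥ 0 for all n and m ∈ C_n, and suppose λ(n) > 0 for 0 ≤ n ≤ N−1 and μ(n) > 0 for 1 ≤ n ≤ N. Define p(0) = (1 + Σ_{n=1}^{N} ∏_{s=1}^{n} λ(s−1)/μ(s))^{−1} and p(n) = (∏_{s=1}^{n} λ(s−1)/μ(s))·p(0) for 1 ≤ n ≤ N. Then the function P(m) := p(w(m))·p_{w(m)}(m) satisfies the steady-state balance equations of the hypercube model, including the normalization Σ_m P(m) = 1. -/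
open Finset Filter

/-- Number of busy units in state `B`. -/
def wt {N : ℕ} (B : Fin N → Bool) : ℕ := (Finset.univ.filter fun i => B i = true).card

/-- The layer `C_n`: states with exactly `n` busy units. -/
def layer (N n : ℕ) : Finset (Fin N → Bool) := Finset.univ.filter fun B => wt B = n

/-- The full state: all units busy. -/
def fullState (N : ℕ) : Fin N → Bool := fun _ => true

/-- Unit `i` is the most preferred free unit at node `j` in state `l`
(ranks are given by the permutation `ζ j`). -/
def dispatched {N J : ℕ} (ζ : Fin J → (Fin N ≃ Fin N)) (l : Fin N → Bool) (j : Fin J)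
    (i : Fin N) : Prop :=
  l i = false ∧ ∀ h : Fin N, (h : ℕ) < ((ζ j).symm i : ℕ) → l ((ζ j) h) = true

instance {N J : ℕ} (ζ : Fin J → (Fin N ≃ Fin N)) (l : Fin N → Bool) (j : Fin J) (i : Fin N) :
    Decidable (dispatched ζ l j i) := by
  unfold dispatched; infer_instance

/-- Upward transition rate `λ_{lm}`: nonzero only if `m` arises from `l` by flipping
one coordinate `i` from free to busy, in which case it is `λ` times the total demand
fraction of the nodes dispatching unit `i` in state `l`. -/
noncomputable def upRate {N J : ℕ} (lam : ℝ) (f : Fin J → ℝ) (ζ : Fin J → (Fin N ≃ Fin N))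
    (l m : Fin N → Bool) : ℝ :=
  ∑ i : Fin N,
    if l i = false ∧ m = Function.update l i true then
      lam * ∑ j : Fin J, if dispatched ζ l j i then f j else 0
    else 0

/-- Downward transition rate `μ_{lm}`: nonzero only if `m` arises from `l` by flipping
one coordinate `i` from busy to free, in which case it is `ν i`. -/
noncomputable def downRate {N : ℕ} (ν : Fin N → ℝ) (l m : Fin N → Bool) : ℝ :=
  ∑ i : Fin N, if l i = true ∧ m = Function.update l i false then ν i else 0

/-- Total upward rate `λ_m = Σ_l λ_{ml}` out of state `m`. -/
noncomputable def totalUp {N J : ℕ} (lam : ℝ) (f : Fin J → ℝ) (ζ : Fin J → (Fin N ≃ Fin N))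
    (m : Fin N → Bool) : ℝ :=
  ∑ l : Fin N → Bool, upRate lam f ζ m l

/-- Total service completion rate `μ_m = Σ_{i busy} ν i` out of state `m`. -/
noncomputable def totalDown {N : ℕ} (ν : Fin N → ℝ) (m : Fin N → Bool) : ℝ :=
  ∑ i : Fin N, if m i = true then ν i else 0

/-- `C^m_n`: the states of layer `n` at Hamming distance 1 from `m`. -/
def adjLayer {N : ℕ} (n : ℕ) (m : Fin N → Bool) : Finset (Fin N → Bool) :=
  (layer N n).filter fun l => (Finset.univ.filter fun i => l i ≠ m i).card = 1

/-- `λ(n) = Σ_{m ∈ C_n} p_n(m) · λ_m`. -/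
noncomputable def layerLamOf {N J : ℕ} (lam : ℝ) (f : Fin J → ℝ) (ζ : Fin J → (Fin N ≃ Fin N))
    (p : ℕ → (Fin N → Bool) → ℝ) (n : ℕ) : ℝ :=
  ∑ m ∈ layer N n, p n m * totalUp lam f ζ m

/-- `μ(n) = Σ_{m ∈ C_n} p_n(m) · μ_m`. -/
noncomputable def layerMuOf {N : ℕ} (ν : Fin N → ℝ) (p : ℕ → (Fin N → Bool) → ℝ) (n : ℕ) : ℝ :=
  ∑ m ∈ layer N n, p n m * totalDown ν m

/-- The conditional probability formulation of the hypercube model. -/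
def IsCondSolution {N J : ℕ} (lam : ℝ) (f : Fin J → ℝ) (ζ : Fin J → (Fin N ≃ Fin N))
    (ν : Fin N → ℝ) (p : ℕ → (Fin N → Bool) → ℝ) : Prop :=
  (∀ m ∈ layer N 0, p 0 m = 1) ∧
  (∀ m ∈ layer N N, p N m = 1) ∧
  (∀ n, 1 ≤ n → n ≤ N - 1 → ∀ m ∈ layer N n,
    p n m =
      (∑ l ∈ layer N (n - 1),
        p (n - 1) l * (layerMuOf ν p n / layerLamOf lam f ζ p (n - 1)) *
          (upRate lam f ζ l m / (totalUp lam f ζ m + totalDown ν m))) +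
      (∑ l ∈ adjLayer (n + 1) m,
        p (n + 1) l * (layerLamOf lam f ζ p n / layerMuOf ν p (n + 1)) *
          (downRate ν l m / (totalUp lam f ζ m + totalDown ν m)))) ∧
  (∀ n ≤ N, ∑ m ∈ layer N n, p n m = 1)

/-- The steady-state balance equations of the hypercube model, with normalization. -/
def SatisfiesBalance {N J : ℕ} (lam : ℝ) (f : Fin J → ℝ) (ζ : Fin J → (Fin N ≃ Fin N))
    (ν : Fin N → ℝ) (P : (Fin N → Bool) → ℝ) : Prop :=
  (∀ m : Fin N → Bool,
    P m * (totalUp lam f ζ m + totalDown ν m) =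
      (∑ l : Fin N → Bool, P l * upRate lam f ζ l m) +
      (∑ l : Fin N → Bool, P l * downRate ν l m)) ∧
  (∑ m : Fin N → Bool, P m = 1)

/-!
The layer totals `λ(n)`, `μ(n)` are the rates of a birth–death chain on the number of busy
units. Its stationary weights `p(n) ∝ ∏_{s ≤ n} λ(s-1)/μ(s)` are characterised by the cut
equations `p(n) λ(n) = p(n+1) μ(n+1)`. Multiplying the conditional recursion at a state `m` of an
interior layer `n` by `p(n) (λ_m + μ_m)`, the two cut equations at `n` turn the coefficients
`p(n) μ(n)/λ(n-1)` and `p(n) λ(n)/μ(n+1)` into `p(n-1)` and `p(n+1)`: this is the balance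
equation at `m` for `P = p(w(·)) p_{w(·)}`. At the empty and the full state the neighbouring
layer's total rate is `μ(1)` resp. `λ(N-1)`, so balance there is a cut equation itself;
normalization holds because each `p_n` sums to 1.
-/

section States

variable {N : ℕ}

@[simp]
lemma mem_layer {n : ℕ} {m : Fin N → Bool} : m ∈ layer N n ↔ wt m = n := by
  simp [layer]

lemma wt_le (m : Fin N → Bool) : wt m ≤ N := by
  simpa [wt] using card_filter_le univ fun i => m i = true

lemma wt_eq_zero_iff {m : Fin N → Bool} : wt m = 0 ↔ m = fun _ => false := by
  simp [wt, funext_iff]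

lemma wt_eq_self_iff {m : Fin N → Bool} : wt m = N ↔ m = fullState N := by
  simpa [wt, fullState, funext_iff] using card_filter_eq_iff (s := univ) (p := fun i => m i = true)

lemma wt_update_true {l : Fin N → Bool} {i : Fin N} (h : l i = false) :
    wt (Function.update l i true) = wt l + 1 := by
  have : (univ.filter fun j => Function.update l i true j = true) =
      insert i (univ.filter fun j => l j = true) := by
    ext j; rcases eq_or_ne j i with rfl | hj <;> simp [*]
  rw [wt, this, card_insert_of_notMem (by simp [h]), wt]

lemma wt_update_false {l : Fin N → Bool} {i : Fin N} (h : l i = true) :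
    wt (Function.update l i false) + 1 = wt l := by
  have := wt_update_true (l := Function.update l i false) (i := i) (by simp)
  rwa [Function.update_idem, ← h, Function.update_eq_self, eq_comm] at this

end States

section Rates

variable {N J : ℕ} {lam : ℝ} {f : Fin J → ℝ} {ζ : Fin J → (Fin N ≃ Fin N)} {ν : Fin N → ℝ}

lemma wt_eq_of_upRate_ne_zero {l m : Fin N → Bool} (h : upRate lam f ζ l m ≠ 0) :
    wt m = wt l + 1 := by
  obtain ⟨i, -, hi⟩ := exists_ne_zero_of_sum_ne_zero h
  by_cases hc : l i = false ∧ m = Function.update l i true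
  · rw [hc.2, wt_update_true hc.1]
  · simp [hc] at hi

lemma mem_adjLayer_of_downRate_ne_zero {l m : Fin N → Bool} (h : downRate ν l m ≠ 0) :
    l ∈ adjLayer (wt m + 1) m := by
  obtain ⟨i, -, hi⟩ := exists_ne_zero_of_sum_ne_zero h
  by_cases hc : l i = true ∧ m = Function.update l i false
  · obtain ⟨hli, rfl⟩ := hc
    have : (univ.filter fun j => l j ≠ Function.update l i false j) = {i} := by
      ext j; rcases eq_or_ne j i with rfl | hj <;> simp [*]
    simp [adjLayer, this, wt_update_false hli]
  · simp [hc] at hi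

lemma totalUp_nonneg (hlam : 0 ≤ lam) (hf : ∀ j, 0 ≤ f j) (m : Fin N → Bool) :
    0 ≤ totalUp lam f ζ m :=
  sum_nonneg fun _ _ => sum_nonneg fun _ _ => by
    split_ifs
    · exact mul_nonneg hlam (sum_nonneg fun j _ => by split_ifs <;> simp [hf j])
    · rfl

lemma totalDown_pos (hν : ∀ i, 0 < ν i) {m : Fin N → Bool} (hm : wt m ≠ 0) :
    0 < totalDown ν m := by
  obtain ⟨i, hi⟩ : ∃ i, m i = true := by
    by_contra! h
    exact hm (wt_eq_zero_iff.mpr (funext fun i => by simpa using h i))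
  exact sum_pos' (fun j _ => by split_ifs <;> simp [(hν j).le]) ⟨i, mem_univ i, by simp [hi, hν i]⟩

lemma totalUp_fullState : totalUp lam f ζ (fullState N) = 0 := by
  simp [totalUp, upRate, fullState]

lemma totalDown_bot : totalDown ν (fun _ => false : Fin N → Bool) = 0 := by
  simp [totalDown]

lemma upRate_fullState (hN : 0 < N) (l : Fin N → Bool) :
    upRate lam f ζ l (fullState N) = if wt l = N - 1 then totalUp lam f ζ l else 0 := by
  have hfull : wt (fullState N) = N := wt_eq_self_iff.mpr rfl
  split_ifs with hl
  · refine (sum_eq_single_of_mem _ (mem_univ _) fun m _ hm => ?_).symm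
    by_contra hne
    exact hm (wt_eq_self_iff.mp (by have := wt_eq_of_upRate_ne_zero hne; omega))
  · by_contra hne
    have := wt_eq_of_upRate_ne_zero hne
    omega

lemma downRate_bot (l : Fin N → Bool) :
    downRate ν l (fun _ => false) = if wt l = 1 then totalDown ν l else 0 := by
  split_ifs with hl
  · refine sum_congr rfl fun i _ => ?_
    cases hli : l i
    · simp
    · have : wt (Function.update l i false) = 0 := by have := wt_update_false hli; omega
      simp [(wt_eq_zero_iff.mp this).symm]
  · by_contra hne
    have := (mem_filter.mp (mem_adjLayer_of_downRate_ne_zero hne)).1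
    rw [mem_layer, wt_eq_zero_iff.mpr rfl] at this
    exact hl this

lemma sum_mul_upRate (g : (Fin N → Bool) → ℝ) (m : Fin N → Bool) :
    ∑ l, g l * upRate lam f ζ l m = ∑ l ∈ layer N (wt m - 1), g l * upRate lam f ζ l m := by
  refine (sum_subset (subset_univ _) fun l _ hl => ?_).symm
  have : upRate lam f ζ l m = 0 := by
    by_contra hne
    have := wt_eq_of_upRate_ne_zero hne
    simp only [mem_layer] at hl
    omega
  rw [this, mul_zero]

lemma sum_mul_downRate (g : (Fin N → Bool) → ℝ) (m : Fin N → Bool) :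
    ∑ l, g l * downRate ν l m = ∑ l ∈ adjLayer (wt m + 1) m, g l * downRate ν l m := by
  refine (sum_subset (subset_univ _) fun l _ hl => ?_).symm
  rw [not_imp_comm.mp mem_adjLayer_of_downRate_ne_zero hl, mul_zero]

end Rates

section Balance

def BalanceAt {N J : ℕ} (lam : ℝ) (f : Fin J → ℝ) (ζ : Fin J → (Fin N ≃ Fin N))
    (ν : Fin N → ℝ) (P : (Fin N → Bool) → ℝ) (m : Fin N → Bool) : Prop :=
  P m * (totalUp lam f ζ m + totalDown ν m) =
    (∑ l, P l * upRate lam f ζ l m) + ∑ l, P l * downRate ν l m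

def layerWeighted {N : ℕ} (w : ℕ → ℝ) (p : ℕ → (Fin N → Bool) → ℝ) (m : Fin N → Bool) : ℝ :=
  w (wt m) * p (wt m) m

variable {N J : ℕ} {lam : ℝ} {f : Fin J → ℝ} {ζ : Fin J → (Fin N ≃ Fin N)} {ν : Fin N → ℝ}
  {p : ℕ → (Fin N → Bool) → ℝ} {w : ℕ → ℝ}

lemma sum_layerWeighted (hnorm : ∀ n ≤ N, ∑ m ∈ layer N n, p n m = 1) :
    ∑ m, layerWeighted w p m = ∑ n ∈ Icc 0 N, w n := by
  rw [← sum_fiberwise_of_maps_to (g := wt) (t := Icc 0 N)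
    (fun m _ => mem_Icc.mpr ⟨Nat.zero_le _, wt_le m⟩)]
  refine sum_congr rfl fun n hn => ?_
  have : ∀ m ∈ layer N n, layerWeighted w p m = w n * p n m := by
    intro m hm; rw [layerWeighted, mem_layer.mp hm]
  rw [← layer, sum_congr rfl this, ← mul_sum, hnorm n (mem_Icc.mp hn).2, mul_one]

lemma balanceAt_bot (h0 : ∀ m ∈ layer N 0, p 0 m = 1)
    (hcut : w 0 * layerLamOf lam f ζ p 0 = w 1 * layerMuOf ν p 1) :
    BalanceAt lam f ζ ν (layerWeighted w p) (fun _ => false) := by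
  have hbot : wt (fun _ => false : Fin N → Bool) = 0 := wt_eq_zero_iff.mpr rfl
  have hlayer : layer N 0 = {fun _ => false} := by ext; simp [wt_eq_zero_iff]
  have hup (l : Fin N → Bool) : upRate lam f ζ l (fun _ => false) = 0 := by
    by_contra hne; have := wt_eq_of_upRate_ne_zero hne; omega
  have hdown : ∑ l, layerWeighted w p l * downRate ν l (fun _ => false) =
      w 1 * layerMuOf ν p 1 := by
    simp_rw [downRate_bot, mul_ite, mul_zero]
    rw [← sum_filter, ← layer, layerMuOf, mul_sum]
    exact sum_congr rfl fun l hl => by rw [layerWeighted, mem_layer.mp hl, mul_assoc]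
  have hp : p 0 (fun _ => false) = 1 := h0 _ (by simp [hbot])
  rw [BalanceAt, hdown]
  simp only [hup, mul_zero, sum_const_zero, zero_add, totalDown_bot, add_zero, layerWeighted,
    hbot, hp, mul_one, ← hcut, layerLamOf, hlayer, sum_singleton, one_mul]

lemma balanceAt_fullState (hN : 0 < N) (hfull : ∀ m ∈ layer N N, p N m = 1)
    (hcut : w (N - 1) * layerLamOf lam f ζ p (N - 1) = w N * layerMuOf ν p N) :
    BalanceAt lam f ζ ν (layerWeighted w p) (fullState N) := by
  have htop : wt (fullState N) = N := wt_eq_self_iff.mpr rfl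
  have hlayer : layer N N = {fullState N} := by ext; simp [wt_eq_self_iff]
  have hdown (l : Fin N → Bool) : downRate ν l (fullState N) = 0 := by
    by_contra hne
    have := mem_adjLayer_of_downRate_ne_zero hne
    simp only [adjLayer, mem_filter, mem_layer] at this
    have := wt_le l
    omega
  have hup : ∑ l, layerWeighted w p l * upRate lam f ζ l (fullState N) =
      w (N - 1) * layerLamOf lam f ζ p (N - 1) := by
    simp_rw [upRate_fullState hN, mul_ite, mul_zero]
    rw [← sum_filter, ← layer, layerLamOf, mul_sum]
    exact sum_congr rfl fun l hl => by rw [layerWeighted, mem_layer.mp hl, mul_assoc]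
  have hp : p N (fullState N) = 1 := hfull _ (by simp [htop])
  rw [BalanceAt, hup]
  simp only [hdown, mul_zero, sum_const_zero, add_zero, totalUp_fullState, zero_add,
    layerWeighted, htop, hp, mul_one, hcut, layerMuOf, hlayer, sum_singleton, one_mul]

lemma balanceAt_of_recursion {m : Fin N → Bool}
    (hrec : p (wt m) m =
      (∑ l ∈ layer N (wt m - 1),
        p (wt m - 1) l * (layerMuOf ν p (wt m) / layerLamOf lam f ζ p (wt m - 1)) *
          (upRate lam f ζ l m / (totalUp lam f ζ m + totalDown ν m))) +
      (∑ l ∈ adjLayer (wt m + 1) m,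
        p (wt m + 1) l * (layerLamOf lam f ζ p (wt m) / layerMuOf ν p (wt m + 1)) *
          (downRate ν l m / (totalUp lam f ζ m + totalDown ν m))))
    (hc : totalUp lam f ζ m + totalDown ν m ≠ 0)
    (hL : layerLamOf lam f ζ p (wt m - 1) ≠ 0) (hM : layerMuOf ν p (wt m + 1) ≠ 0)
    (hcut_lo : w (wt m - 1) * layerLamOf lam f ζ p (wt m - 1) = w (wt m) * layerMuOf ν p (wt m))
    (hcut_hi : w (wt m) * layerLamOf lam f ζ p (wt m) = w (wt m + 1) * layerMuOf ν p (wt m + 1)) :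
    BalanceAt lam f ζ ν (layerWeighted w p) m := by
  set n := wt m
  set c := totalUp lam f ζ m + totalDown ν m
  set A := ∑ l ∈ layer N (n - 1), p (n - 1) l * upRate lam f ζ l m
  set B := ∑ l ∈ adjLayer (n + 1) m, p (n + 1) l * downRate ν l m
  have hrec' : p n m * c =
      layerMuOf ν p n / layerLamOf lam f ζ p (n - 1) * A +
        layerLamOf lam f ζ p n / layerMuOf ν p (n + 1) * B := by
    rw [hrec, add_mul, sum_mul, sum_mul, mul_sum, mul_sum]
    congr 1 <;> refine sum_congr rfl fun l _ => ?_ <;> field_simp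
  have hup : ∑ l, layerWeighted w p l * upRate lam f ζ l m = w (n - 1) * A := by
    rw [sum_mul_upRate, mul_sum]
    exact sum_congr rfl fun l hl => by rw [layerWeighted, mem_layer.mp hl, mul_assoc]
  have hdown : ∑ l, layerWeighted w p l * downRate ν l m = w (n + 1) * B := by
    rw [sum_mul_downRate, mul_sum]
    refine sum_congr rfl fun l hl => ?_
    rw [layerWeighted, mem_layer.mp (mem_filter.mp hl).1, mul_assoc]
  have hlo : w n * (layerMuOf ν p n / layerLamOf lam f ζ p (n - 1)) = w (n - 1) := by
    rw [← mul_div_assoc, ← hcut_lo, mul_div_cancel_right₀ _ hL]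
  have hhi : w n * (layerLamOf lam f ζ p n / layerMuOf ν p (n + 1)) = w (n + 1) := by
    rw [← mul_div_assoc, hcut_hi, mul_div_cancel_right₀ _ hM]
  show w n * p n m * c = _
  rw [hup, hdown, mul_assoc, hrec', mul_add, ← mul_assoc, ← mul_assoc, hlo, hhi]

theorem balanceAt_layerWeighted (hN : 0 < N) (hlam : 0 ≤ lam) (hf : ∀ j, 0 ≤ f j)
    (hν : ∀ i, 0 < ν i) (hsol : IsCondSolution lam f ζ ν p)
    (hL : ∀ n < N, layerLamOf lam f ζ p n ≠ 0) (hM : ∀ n, 1 ≤ n → n ≤ N → layerMuOf ν p n ≠ 0)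
    (hcut : ∀ k < N, w k * layerLamOf lam f ζ p k = w (k + 1) * layerMuOf ν p (k + 1))
    (m : Fin N → Bool) :
    BalanceAt lam f ζ ν (layerWeighted w p) m := by
  obtain ⟨h0, hfull, hrec, -⟩ := hsol
  have hmN := wt_le m
  by_cases hm0 : wt m = 0
  · rw [wt_eq_zero_iff.mp hm0]
    exact balanceAt_bot h0 (hcut 0 hN)
  by_cases hmN' : wt m = N
  · rw [wt_eq_self_iff.mp hmN']
    have := hcut (N - 1) (by omega)
    rw [Nat.sub_add_cancel hN] at this
    exact balanceAt_fullState hN hfull this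
  refine balanceAt_of_recursion (hrec (wt m) (by omega) (by omega) m (mem_layer.mpr rfl))
    (add_pos_of_nonneg_of_pos (totalUp_nonneg hlam hf m) (totalDown_pos hν hm0)).ne'
    (hL _ (by omega)) (hM _ (by omega) (by omega)) ?_ (hcut _ (by omega))
  have := hcut (wt m - 1) (by omega)
  rwa [Nat.sub_add_cancel (by omega)] at this

end Balance

section BirthDeath

noncomputable def birthDeathWeight (L M : ℕ → ℝ) (n : ℕ) : ℝ :=
  ∏ s ∈ Icc 1 n, L (s - 1) / M s

variable {L M : ℕ → ℝ}

lemma birthDeathWeight_succ_mul {k : ℕ} (hM : M (k + 1) ≠ 0) :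
    birthDeathWeight L M (k + 1) * M (k + 1) = birthDeathWeight L M k * L k := by
  rw [birthDeathWeight, prod_Icc_succ_top (by omega), Nat.add_sub_cancel, mul_assoc,
    div_mul_cancel₀ _ hM, birthDeathWeight]

lemma birthDeathWeight_pos {N n : ℕ} (hL : ∀ k < N, 0 < L k) (hM : ∀ k, 1 ≤ k → k ≤ N → 0 < M k)
    (hn : n ≤ N) : 0 < birthDeathWeight L M n :=
  prod_pos fun s hs => by
    rw [mem_Icc] at hs
    exact div_pos (hL _ (by omega)) (hM s hs.1 (by omega))

lemma sum_Icc_zero_birthDeathWeight (N : ℕ) :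
    ∑ n ∈ Icc 0 N, birthDeathWeight L M n = 1 + ∑ n ∈ Icc 1 N, birthDeathWeight L M n := by
  rw [← insert_Icc_add_one_left_eq_Icc (Nat.zero_le N), sum_insert (by simp)]
  simp [birthDeathWeight]

end BirthDeath

theorem hypercube_reformulation_general
    {N J : ℕ} (hN : 2 ≤ N)
    (lam : ℝ) (hlam : 0 < lam)
    (f : Fin J → ℝ) (hf : ∀ j, 0 ≤ f j)
    (ν : Fin N → ℝ) (hν : ∀ i, 0 < ν i)
    (ζ : Fin J → (Fin N ≃ Fin N))
    (p : ℕ → (Fin N → Bool) → ℝ)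
    (hsol : IsCondSolution lam f ζ ν p)
    (hlamPos : ∀ n ≤ N - 1, 0 < layerLamOf lam f ζ p n)
    (hmuPos : ∀ n, 1 ≤ n → n ≤ N → 0 < layerMuOf ν p n) :
    SatisfiesBalance lam f ζ ν (fun m =>
      ((∏ s ∈ Finset.Icc 1 (wt m), layerLamOf lam f ζ p (s - 1) / layerMuOf ν p s) *
          (1 + ∑ n ∈ Finset.Icc 1 N, ∏ s ∈ Finset.Icc 1 n,
              layerLamOf lam f ζ p (s - 1) / layerMuOf ν p s)⁻¹) *
        p (wt m) m) := by
  set L := layerLamOf lam f ζ p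
  set M := layerMuOf ν p
  have hL : ∀ n < N, 0 < L n := fun n hn => hlamPos n (by omega)
  set Z := 1 + ∑ n ∈ Icc 1 N, birthDeathWeight L M n
  have hZ : 0 < Z := add_pos_of_pos_of_nonneg one_pos
    (sum_nonneg fun n hn => (birthDeathWeight_pos hL hmuPos (mem_Icc.mp hn).2).le)
  change SatisfiesBalance lam f ζ ν (layerWeighted (fun n => birthDeathWeight L M n * Z⁻¹) p)
  refine ⟨balanceAt_layerWeighted (by omega) hlam.le hf hν hsol (fun n hn => (hL n hn).ne')
    (fun n h1 h2 => (hmuPos n h1 h2).ne') (fun k hk => ?_), ?_⟩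
  · rw [mul_right_comm, ← birthDeathWeight_succ_mul (hmuPos _ (by omega) hk).ne', mul_right_comm]
  · rw [sum_layerWeighted hsol.2.2.2, ← sum_mul, sum_Icc_zero_birthDeathWeight,
      mul_inv_cancel₀ hZ.ne']

/-- Proposition 1 (reformulation of the zero-capacity hypercube model). -/
theorem hypercube_reformulation
    {N J : ℕ} (hN : 2 ≤ N) (hJ : 1 ≤ J)
    (lam : ℝ) (hlam : 0 < lam)
    (f : Fin J → ℝ) (hf : ∀ j, 0 ≤ f j) (hfsum : ∑ j, f j = 1)
    (ν : Fin N → ℝ) (hν : ∀ i, 0 < ν i)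
    (ζ : Fin J → (Fin N ≃ Fin N))
    (p : ℕ → (Fin N → Bool) → ℝ)
    (hsol : IsCondSolution lam f ζ ν p)
    (hnonneg : ∀ n ≤ N, ∀ m ∈ layer N n, 0 ≤ p n m)
    (hlamPos : ∀ n ≤ N - 1, 0 < layerLamOf lam f ζ p n)
    (hmuPos : ∀ n, 1 ≤ n → n ≤ N → 0 < layerMuOf ν p n) :
    SatisfiesBalance lam f ζ ν (fun m =>
      ((∏ s ∈ Finset.Icc 1 (wt m), layerLamOf lam f ζ p (s - 1) / layerMuOf ν p s) *
          (1 + ∑ n ∈ Finset.Icc 1 N, ∏ s ∈ Finset.Icc 1 n,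
              layerLamOf lam f ζ p (s - 1) / layerMuOf ν p s)⁻¹) *
        p (wt m) m) :=
  hypercube_reformulation_general hN lam hlam f hf ν hν ζ p hsol hlamPos hmuPos
end

section
/- (Corollary, Homogeneous Setting, part 1: Normalization Property.) Suppose the service rates are homogeneous, i.e. ν_i = ν > 0 for all i = 1,…,N. Then for the CPU algorithm iterates, the normalization is exact at every iteration: Σ_{m∈C_n} p_n^{k}(m) = 1 for every iteration k ≥ 1 and every layer 0 ≤ n ≤ N. -/
open Finset Filter

/-- `λ^k(n) = Σ_{m ∈ C_n} p_n^k(m) · λ_m`. -/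
noncomputable def lamI {N J : ℕ} (lam : ℝ) (f : Fin J → ℝ) (ζ : Fin J → (Fin N ≃ Fin N))
    (pI : ℕ → ℕ → (Fin N → Bool) → ℝ) (k n : ℕ) : ℝ :=
  ∑ m ∈ layer N n, pI k n m * totalUp lam f ζ m

/-- `μ^k(n) = Σ_{m ∈ C_n} p_n^k(m) · μ_m`. -/
noncomputable def muI {N : ℕ} (ν : Fin N → ℝ) (pI : ℕ → ℕ → (Fin N → Bool) → ℝ) (k n : ℕ) : ℝ :=
  ∑ m ∈ layer N n, pI k n m * totalDown ν m

/-- `μ^{k,r}(n) = Σ_{m ∈ C_n} p_n^{k,r}(m) · μ_m`. -/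
noncomputable def muR {N : ℕ} (ν : Fin N → ℝ) (pR : ℕ → ℕ → ℕ → (Fin N → Bool) → ℝ)
    (k n r : ℕ) : ℝ :=
  ∑ m ∈ layer N n, pR k n r m * totalDown ν m

/-- The iterates of the CPU (Conditional Probability Update) algorithm:
`pI k n m` is the converged outer iterate `p_n^k(m)` and `pR k n r m` is the inner
iterate `p_n^{k,r}(m)`.  The converged value `p_n^k` is by definition the limit of
the inner iterates as `r → ∞`. -/
def IsCPUIterates {N J : ℕ} (lam : ℝ) (f : Fin J → ℝ) (ζ : Fin J → (Fin N ≃ Fin N))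
    (ν : Fin N → ℝ) (pI : ℕ → ℕ → (Fin N → Bool) → ℝ)
    (pR : ℕ → ℕ → ℕ → (Fin N → Bool) → ℝ) : Prop :=
  (∀ n ≤ N, ∀ m ∈ layer N n, pI 0 n m = 0) ∧
  (∀ n ≤ N, ∀ m ∈ layer N n, pI 1 n m = 1 / (N.choose n : ℝ)) ∧
  (∀ n ≤ N, ∀ r, 1 ≤ r → ∀ m ∈ layer N n, pR 1 n r m = 1 / (N.choose n : ℝ)) ∧
  (∀ k, 1 ≤ k → ∀ m ∈ layer N 0, pI k 0 m = 1) ∧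
  (∀ k, 1 ≤ k → ∀ m ∈ layer N N, pI k N m = 1) ∧
  (∀ k, 2 ≤ k → ∀ r, ∀ m ∈ layer N 0, pR k 0 r m = 1) ∧
  (∀ k, 2 ≤ k → ∀ r, ∀ m ∈ layer N N, pR k N r m = 1) ∧
  (∀ k, 2 ≤ k → ∀ n, 1 ≤ n → n ≤ N - 1 → ∀ m ∈ layer N n, pR k n 0 m = pI (k - 1) n m) ∧
  (∀ k, 2 ≤ k → ∀ n, 1 ≤ n → n ≤ N - 1 → ∀ r, 1 ≤ r → ∀ m ∈ layer N n,
    pR k n r m =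
      (∑ l ∈ layer N (n - 1),
        pI k (n - 1) l * (muR ν pR k n (r - 1) / lamI lam f ζ pI k (n - 1)) *
          (upRate lam f ζ l m / (totalUp lam f ζ m + totalDown ν m))) +
      (∑ l ∈ adjLayer (n + 1) m,
        pI (k - 1) (n + 1) l * (lamI lam f ζ pI (k - 1) n / muI ν pI (k - 1) (n + 1)) *
          (downRate ν l m / (totalUp lam f ζ m + totalDown ν m)))) ∧
  (∀ k, 2 ≤ k → ∀ n, 1 ≤ n → n ≤ N - 1 → ∀ m ∈ layer N n,
    Filter.Tendsto (fun r => pR k n r m) Filter.atTop (nhds (pI k n m)))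

/-! With homogeneous rates `ν i = ν`, every state `m` of a layer `0 < n < N` has `λ_m = λ`
(each node dispatches exactly one free unit and `Σ f_j = 1`) and `μ_m = n ν`, so
`λ_m + μ_m = λ + n ν` is constant on the layer. If the neighbouring layers carry unit mass,
then `λ^k(n - 1) = λ^{k-1}(n) = λ` and `μ^{k-1}(n + 1) = (n + 1) ν`, and summing the update over
`C_n` the flow from `C_{n-1}` totals `λ` while the flow from `C_{n+1}` totals `(n + 1) ν`. The
updated mass is therefore `(μ^{k,r-1}(n) + λ) / (λ + n ν)`, which is `1` as soon as the previous
inner iterate had unit mass; this persists in the limit `r → ∞`, and an induction on `k` and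
then on `n`, starting from the boundary layers fixed at `1`, closes the argument. -/

namespace Hypercube

variable {N J : ℕ}

theorem sum_mul_eq_of_sum_eq_one {ι : Type*} {s : Finset ι} {p g : ι → ℝ} {c : ℝ}
    (hp : ∑ m ∈ s, p m = 1) (hg : ∀ m ∈ s, g m = c) : ∑ m ∈ s, p m * g m = c := by
  rw [sum_congr rfl fun m hm => by rw [hg m hm], ← sum_mul, hp, one_mul]

theorem mem_layer {n : ℕ} {m : Fin N → Bool} : m ∈ layer N n ↔ wt m = n := by
  simp [layer]

theorem card_layer (N n : ℕ) : #(layer N n) = N.choose n := by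
  rw [show N.choose n = #(powersetCard n (univ : Finset (Fin N))) by simp]
  refine card_nbij' (fun B => univ.filter fun i => B i = true) (fun s i => decide (i ∈ s))
    ?_ ?_ ?_ ?_
  · intro B hB
    simpa [mem_powersetCard, wt] using mem_layer.mp hB
  · intro s hs
    simpa [mem_layer, wt] using (mem_powersetCard.mp hs).2
  · intro B _
    funext i
    simp
  · intro s _
    ext i
    simp

theorem exists_eq_false_of_wt_lt {m : Fin N → Bool} (h : wt m < N) : ∃ i, m i = false := by
  by_contra! hm
  have : univ.filter (fun i => m i = true) = univ := by simpa using hm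
  simp [wt, this] at h

theorem wt_update_true {l : Fin N → Bool} {i : Fin N} (hi : l i = false) :
    wt (Function.update l i true) = wt l + 1 := by
  have : univ.filter (fun x => Function.update l i true x = true)
      = insert i (univ.filter fun x => l x = true) := by
    ext x
    by_cases hx : x = i <;> simp [Function.update, hx]
  rw [wt, this, card_insert_of_notMem (by simp [hi]), wt]

theorem wt_update_false {l : Fin N → Bool} {i : Fin N} (hi : l i = true) :
    wt (Function.update l i false) + 1 = wt l := by
  have : univ.filter (fun x => Function.update l i false x = true)
      = (univ.filter fun x => l x = true).erase i := by
    ext x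
    by_cases hx : x = i <;> simp [Function.update, hx]
  rw [wt, this, card_erase_add_one (by simp [hi]), wt]

section Dispatch

variable (ζ : Fin J → (Fin N ≃ Fin N)) {l : Fin N → Bool} (j : Fin J)

theorem dispatched_injective {i i' : Fin N} (hi : dispatched ζ l j i)
    (hi' : dispatched ζ l j i') : i = i' := by
  by_contra hne
  rcases lt_or_gt_of_ne ((ζ j).symm.injective.ne hne) with hlt | hlt
  · simpa [hi.1] using hi'.2 _ hlt
  · simpa [hi'.1] using hi.2 _ hlt

/-- The dispatched unit is the free unit of least rank in `ζ j`. -/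
theorem exists_dispatched (hl : ∃ i, l i = false) : ∃ i, dispatched ζ l j i := by
  obtain ⟨i₀, hi₀⟩ := hl
  let free := univ.filter fun h => l (ζ j h) = false
  have hfree : free.Nonempty := ⟨(ζ j).symm i₀, by simp [free, hi₀]⟩
  refine ⟨ζ j (free.min' hfree), by simpa [free] using free.min'_mem hfree, fun h hh => ?_⟩
  rw [Equiv.symm_apply_apply] at hh
  by_contra hlh
  exact (free.min'_le h (by simpa [free] using hlh)).not_gt (Fin.lt_def.mpr hh)

theorem sum_ite_dispatched (hl : ∃ i, l i = false) (c : ℝ) :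
    ∑ i, (if dispatched ζ l j i then c else 0) = c := by
  obtain ⟨i₀, hi₀⟩ := exists_dispatched ζ j hl
  rw [sum_eq_single i₀ (fun i _ hi => if_neg fun h => hi (dispatched_injective ζ j h hi₀))
    (by simp), if_pos hi₀]

end Dispatch

section Rates

variable (lam : ℝ) (f : Fin J → ℝ) (ζ : Fin J → (Fin N ≃ Fin N)) (ν : Fin N → ℝ)
  {l m : Fin N → Bool}

theorem totalUp_eq_mul_sum (hm : ∃ i, m i = false) :
    totalUp lam f ζ m = lam * ∑ j, f j := by
  have hcol : ∀ i, ∑ l, (if m i = false ∧ l = Function.update m i true then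
      lam * ∑ j, (if dispatched ζ m j i then f j else 0) else 0)
      = lam * ∑ j, (if dispatched ζ m j i then f j else 0) := by
    intro i
    by_cases hmi : m i = false
    · simp [hmi]
    · simp [hmi, dispatched]
  simp only [totalUp, upRate]
  rw [sum_comm]
  simp only [hcol, ← mul_sum]
  rw [sum_comm, sum_congr rfl fun j _ => sum_ite_dispatched ζ j hm (f j)]

theorem totalDown_eq_of_forall_eq {c : ℝ} (hν : ∀ i, ν i = c) :
    totalDown ν m = wt m * c := by
  simp [totalDown, hν, sum_ite, wt]

theorem exists_of_upRate_ne_zero (h : upRate lam f ζ l m ≠ 0) :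
    ∃ i, l i = false ∧ m = Function.update l i true := by
  obtain ⟨i, -, hi⟩ := exists_ne_zero_of_sum_ne_zero h
  exact ⟨i, (ite_ne_right_iff.mp hi).1⟩

theorem exists_of_downRate_ne_zero (h : downRate ν l m ≠ 0) :
    ∃ i, l i = true ∧ m = Function.update l i false := by
  obtain ⟨i, -, hi⟩ := exists_ne_zero_of_sum_ne_zero h
  exact ⟨i, (ite_ne_right_iff.mp hi).1⟩

theorem sum_upRate_layer :
    ∑ m ∈ layer N (wt l + 1), upRate lam f ζ l m = totalUp lam f ζ l := by
  refine sum_subset (subset_univ _) fun m _ hm => ?_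
  by_contra h
  obtain ⟨i, hi, rfl⟩ := exists_of_upRate_ne_zero lam f ζ h
  exact hm (mem_layer.mpr (wt_update_true hi))

theorem sum_downRate : ∑ m, downRate ν l m = totalDown ν l := by
  simp only [downRate]
  rw [sum_comm]
  refine sum_congr rfl fun i _ => ?_
  by_cases hli : l i = true <;> simp [hli]

theorem sum_downRate_layer {n : ℕ} (hl : wt l = n + 1) :
    ∑ m ∈ layer N n, downRate ν l m = totalDown ν l := by
  rw [← sum_downRate]
  refine sum_subset (subset_univ _) fun m _ hm => ?_
  by_contra h
  obtain ⟨i, hi, rfl⟩ := exists_of_downRate_ne_zero ν h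
  exact hm (mem_layer.mpr (by have := wt_update_false hi; omega))

theorem downRate_eq_zero_of_notMem_adjLayer {n : ℕ} (hl : l ∈ layer N n) (h : l ∉ adjLayer n m) :
    downRate ν l m = 0 := by
  by_contra h0
  obtain ⟨i, hi, rfl⟩ := exists_of_downRate_ne_zero ν h0
  refine h (mem_filter.mpr ⟨hl, card_eq_one.mpr ⟨i, ?_⟩⟩)
  ext x
  by_cases hx : x = i <;> simp [Function.update, hx, hi]

theorem sum_sum_adjLayer_downRate (g : (Fin N → Bool) → ℝ) (n : ℕ) :
    ∑ m ∈ layer N n, ∑ l ∈ adjLayer (n + 1) m, g l * downRate ν l m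
      = ∑ l ∈ layer N (n + 1), g l * totalDown ν l := by
  have hadj : ∀ m, ∑ l ∈ adjLayer (n + 1) m, g l * downRate ν l m
      = ∑ l ∈ layer N (n + 1), g l * downRate ν l m := fun m =>
    sum_subset (filter_subset _ _) fun l hl hlm => by
      rw [downRate_eq_zero_of_notMem_adjLayer ν hl hlm, mul_zero]
  simp only [hadj]
  rw [sum_comm]
  exact sum_congr rfl fun l hl => by rw [← mul_sum, sum_downRate_layer ν (mem_layer.mp hl)]

theorem sum_sum_layer_upRate (g : (Fin N → Bool) → ℝ) (n : ℕ) :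
    ∑ m ∈ layer N (n + 1), ∑ l ∈ layer N n, g l * upRate lam f ζ l m
      = ∑ l ∈ layer N n, g l * totalUp lam f ζ l := by
  rw [sum_comm]
  refine sum_congr rfl fun l hl => ?_
  rw [← mul_sum, ← mem_layer.mp hl, sum_upRate_layer]

theorem totalUp_eq_of_mem_layer (hfsum : ∑ j, f j = 1) {n : ℕ} (hn : n < N)
    (hm : m ∈ layer N n) : totalUp lam f ζ m = lam := by
  rw [totalUp_eq_mul_sum lam f ζ (exists_eq_false_of_wt_lt (mem_layer.mp hm ▸ hn)), hfsum, mul_one]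

theorem totalDown_eq_of_mem_layer {c : ℝ} (hν : ∀ i, ν i = c) {n : ℕ}
    (hm : m ∈ layer N n) : totalDown ν m = n * c := by
  rw [totalDown_eq_of_forall_eq ν hν, mem_layer.mp hm]

/-- In the CPU update of layer `n + 1`, `a` stands for `μ^{k,r-1}(n + 1) / λ^k(n)` and `b` for
`λ^{k-1}(n + 1) / μ^{k-1}(n + 2)`. -/
theorem sum_layer_cpuUpdate (hfsum : ∑ j, f j = 1) {c : ℝ} (hν : ∀ i, ν i = c) {n : ℕ}
    (hn : n + 1 < N) {p q : (Fin N → Bool) → ℝ} (hp : ∑ l ∈ layer N n, p l = 1)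
    (hq : ∑ l ∈ layer N (n + 2), q l = 1) (a b : ℝ) :
    ∑ m ∈ layer N (n + 1),
      (∑ l ∈ layer N n, p l * a * (upRate lam f ζ l m / (totalUp lam f ζ m + totalDown ν m)) +
        ∑ l ∈ adjLayer (n + 2) m, q l * b * (downRate ν l m / (totalUp lam f ζ m + totalDown ν m)))
      = (a * lam + b * ((n + 2) * c)) / (lam + (n + 1) * c) := by
  set D := lam + (n + 1) * c
  have hD : ∀ m ∈ layer N (n + 1), totalUp lam f ζ m + totalDown ν m = D := fun m hm => by
    rw [totalUp_eq_of_mem_layer lam f ζ hfsum hn hm, totalDown_eq_of_mem_layer ν hν hm]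
    push_cast; rfl
  have hup : ∑ m ∈ layer N (n + 1), ∑ l ∈ layer N n, p l * upRate lam f ζ l m = lam := by
    rw [sum_sum_layer_upRate, sum_mul_eq_of_sum_eq_one hp fun l hl =>
      totalUp_eq_of_mem_layer lam f ζ hfsum (by omega) hl]
  have hdown : ∑ m ∈ layer N (n + 1), ∑ l ∈ adjLayer (n + 2) m, q l * downRate ν l m
      = (n + 2) * c := by
    rw [sum_sum_adjLayer_downRate, sum_mul_eq_of_sum_eq_one hq fun l hl =>
      totalDown_eq_of_mem_layer ν hν hl]
    push_cast; rfl
  calc _ = ∑ m ∈ layer N (n + 1), (a / D * ∑ l ∈ layer N n, p l * upRate lam f ζ l m +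
          b / D * ∑ l ∈ adjLayer (n + 2) m, q l * downRate ν l m) := by
        refine sum_congr rfl fun m hm => ?_
        simp only [hD m hm, mul_sum]
        congr 1 <;> exact sum_congr rfl fun l _ => by ring
    _ = (a * lam + b * ((n + 2) * c)) / D := by
        rw [sum_add_distrib, ← mul_sum, ← mul_sum, hup, hdown]
        ring

end Rates

section Iterates

variable {lam : ℝ} {f : Fin J → ℝ} {ζ : Fin J → (Fin N ≃ Fin N)} {ν : Fin N → ℝ}
  {pI : ℕ → ℕ → (Fin N → Bool) → ℝ} {pR : ℕ → ℕ → ℕ → (Fin N → Bool) → ℝ}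

theorem IsCPUIterates.sum_pR_eq_one (hiter : IsCPUIterates lam f ζ ν pI pR)
    (hfsum : ∑ j, f j = 1) (hlam : 0 < lam) {c : ℝ} (hc : 0 < c) (hν : ∀ i, ν i = c)
    {k n : ℕ} (hk : 1 ≤ k) (hn : n + 1 < N) (hbelow : ∑ m ∈ layer N n, pI (k + 1) n m = 1)
    (hsame : ∑ m ∈ layer N (n + 1), pI k (n + 1) m = 1)
    (habove : ∑ m ∈ layer N (n + 2), pI k (n + 2) m = 1) (r : ℕ) :
    ∑ m ∈ layer N (n + 1), pR (k + 1) (n + 1) r m = 1 := by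
  obtain ⟨-, -, -, -, -, -, -, hinit, hrec, -⟩ := hiter
  induction r with
  | zero => rwa [sum_congr rfl (hinit (k + 1) (by omega) (n + 1) (by omega) (by omega))]
  | succ r ih =>
    have hmuR : muR ν pR (k + 1) (n + 1) r = (n + 1 : ℕ) * c :=
      sum_mul_eq_of_sum_eq_one ih fun m hm => totalDown_eq_of_mem_layer ν hν hm
    have hlamI : lamI lam f ζ pI (k + 1) n = lam :=
      sum_mul_eq_of_sum_eq_one hbelow fun m hm =>
        totalUp_eq_of_mem_layer lam f ζ hfsum (by omega) hm
    have hlamI' : lamI lam f ζ pI k (n + 1) = lam :=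
      sum_mul_eq_of_sum_eq_one hsame fun m hm => totalUp_eq_of_mem_layer lam f ζ hfsum hn hm
    have hmuI : muI ν pI k (n + 2) = (n + 2 : ℕ) * c :=
      sum_mul_eq_of_sum_eq_one habove fun m hm => totalDown_eq_of_mem_layer ν hν hm
    rw [sum_congr rfl (hrec (k + 1) (by omega) (n + 1) (by omega) (by omega) (r + 1) (by omega))]
    simp only [Nat.add_sub_cancel]
    rw [sum_layer_cpuUpdate lam f ζ ν hfsum hν hn hbelow habove, hmuR, hlamI, hlamI', hmuI]
    push_cast
    field_simp
    ring

theorem IsCPUIterates.sum_pI_eq_one (hiter : IsCPUIterates lam f ζ ν pI pR)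
    (hfsum : ∑ j, f j = 1) (hlam : 0 < lam) {c : ℝ} (hc : 0 < c) (hν : ∀ i, ν i = c)
    {k n : ℕ} (hk : 1 ≤ k) (hn : n + 1 < N) (hbelow : ∑ m ∈ layer N n, pI (k + 1) n m = 1)
    (hsame : ∑ m ∈ layer N (n + 1), pI k (n + 1) m = 1)
    (habove : ∑ m ∈ layer N (n + 2), pI k (n + 2) m = 1) :
    ∑ m ∈ layer N (n + 1), pI (k + 1) (n + 1) m = 1 := by
  have hinner := IsCPUIterates.sum_pR_eq_one hiter hfsum hlam hc hν hk hn hbelow hsame habove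
  obtain ⟨-, -, -, -, -, -, -, -, -, hconv⟩ := hiter
  have hlim := tendsto_finsetSum (layer N (n + 1)) fun m hm =>
    hconv (k + 1) (by omega) (n + 1) (by omega) (by omega) m hm
  simp only [hinner] at hlim
  exact tendsto_nhds_unique hlim tendsto_const_nhds

end Iterates

end Hypercube

open Hypercube in
theorem cpu_homogeneous_normalization_general
    {N J : ℕ}
    (lam : ℝ) (hlam : 0 < lam)
    (f : Fin J → ℝ) (hfsum : ∑ j, f j = 1)
    (ν : Fin N → ℝ)
    (ζ : Fin J → (Fin N ≃ Fin N))
    (pI : ℕ → ℕ → (Fin N → Bool) → ℝ) (pR : ℕ → ℕ → ℕ → (Fin N → Bool) → ℝ)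
    (hiter : IsCPUIterates lam f ζ ν pI pR)
    (nu0 : ℝ) (hnu0 : 0 < nu0) (hhom : ∀ i, ν i = nu0) :
    ∀ k, 1 ≤ k → ∀ n ≤ N, ∑ m ∈ layer N n, pI k n m = 1 := by
  have ⟨_, hfirst, _, hbottom, htop, _⟩ := hiter
  intro k hk
  induction k, hk using Nat.le_induction with
  | base =>
    intro n hn
    simp [sum_congr rfl (hfirst n hn), card_layer, (Nat.choose_pos hn).ne']
  | succ k hk ih =>
    intro n hn
    induction n with
    | zero => simp [sum_congr rfl (hbottom (k + 1) (by omega)), card_layer]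
    | succ n ihn =>
      rcases (by omega : n + 1 < N ∨ n + 1 = N) with hlt | rfl
      · exact IsCPUIterates.sum_pI_eq_one hiter hfsum hlam hnu0 hhom hk hlt (ihn (by omega))
          (ih _ hn) (ih _ hlt)
      · simp [sum_congr rfl (htop (k + 1) (by omega)), card_layer]

/-- Corollary (homogeneous setting), part 1: exact normalization at every iteration. -/
theorem cpu_homogeneous_normalization
    {N J : ℕ} (hN : 2 ≤ N) (hJ : 1 ≤ J)
    (lam : ℝ) (hlam : 0 < lam)
    (f : Fin J → ℝ) (hf : ∀ j, 0 ≤ f j) (hfsum : ∑ j, f j = 1)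
    (ν : Fin N → ℝ) (hν : ∀ i, 0 < ν i)
    (ζ : Fin J → (Fin N ≃ Fin N))
    (pI : ℕ → ℕ → (Fin N → Bool) → ℝ) (pR : ℕ → ℕ → ℕ → (Fin N → Bool) → ℝ)
    (hiter : IsCPUIterates lam f ζ ν pI pR)
    (nu0 : ℝ) (hnu0 : 0 < nu0) (hhom : ∀ i, ν i = nu0) :
    ∀ k, 1 ≤ k → ∀ n ≤ N, ∑ m ∈ layer N n, pI k n m = 1 :=
  cpu_homogeneous_normalization_general lam hlam f hfsum ν ζ pI pR hiter nu0 hnu0 hhom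
end

section
/- (Homogeneous contraction-factor identity, Section 3.2.) For all real numbers λ > 0 and ν > 0 and every integer N ≥ 2: (λ/(λ + N·ν))·(Σ_{q=2}^{N} ∏_{j=q}^{N} (j·ν)/(λ + (j−1)·ν) + 1) = (∏_{j=1}^{N} (λ + j·ν) − ∏_{j=1}^{N} (j·ν)) / ∏_{j=1}^{N} (λ + j·ν), and this common value is strictly less than 1. -/
open Finset

lemma phi_aux (lam nu : ℝ) (hlam : 0 < lam) (hnu : 0 < nu) :
    ∀ N : ℕ, 1 ≤ N →
    (lam / (lam + (N : ℝ) * nu)) *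
        ((∑ q ∈ Finset.Icc 2 N, ∏ j ∈ Finset.Icc q N,
            ((j : ℝ) * nu) / (lam + ((j - 1 : ℕ) : ℝ) * nu)) + 1) =
      ((∏ j ∈ Finset.Icc 1 N, (lam + (j : ℝ) * nu)) - ∏ j ∈ Finset.Icc 1 N, ((j : ℝ) * nu)) /
        (∏ j ∈ Finset.Icc 1 N, (lam + (j : ℝ) * nu)) := by
  intro N hN1
  induction N, hN1 using Nat.le_induction with
  | base =>
    simp
  | succ N hN ih =>
    have hden : (0:ℝ) < lam + (N:ℝ) * nu := by positivity
    have hA : (0:ℝ) < ∏ j ∈ Finset.Icc 1 N, (lam + (j : ℝ) * nu) := by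
      apply Finset.prod_pos; intro j hj; positivity
    -- rewrite sum over Icc 2 (N+1)
    rw [Finset.sum_Icc_succ_top (by omega : 2 ≤ N + 1)]
    have hsum : ∀ q ∈ Finset.Icc 2 N,
        (∏ j ∈ Finset.Icc q (N+1), ((j : ℝ) * nu) / (lam + ((j - 1 : ℕ) : ℝ) * nu))
          = (∏ j ∈ Finset.Icc q N, ((j : ℝ) * nu) / (lam + ((j - 1 : ℕ) : ℝ) * nu))
            * (((N+1 : ℕ) : ℝ) * nu / (lam + (N : ℝ) * nu)) := by
      intro q hq
      simp only [Finset.mem_Icc] at hq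
      rw [Finset.prod_Icc_succ_top (by omega : q ≤ N + 1)]
      simp
    rw [Finset.sum_congr rfl hsum, ← Finset.sum_mul]
    rw [Finset.prod_Icc_succ_top (by omega : 1 ≤ N + 1),
        Finset.prod_Icc_succ_top (by omega : 1 ≤ N + 1)]
    have hIcc : Finset.Icc (N+1) (N+1) = {N+1} := by simp
    rw [hIcc, Finset.prod_singleton]
    set S := ∑ q ∈ Finset.Icc 2 N, ∏ j ∈ Finset.Icc q N,
        ((j : ℝ) * nu) / (lam + ((j - 1 : ℕ) : ℝ) * nu) with hS
    set A := ∏ j ∈ Finset.Icc 1 N, (lam + (j : ℝ) * nu) with hAdef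
    set B := ∏ j ∈ Finset.Icc 1 N, ((j : ℝ) * nu) with hBdef
    have ih' := ih
    have hAne : A ≠ 0 := ne_of_gt hA
    have hdne : lam + (N:ℝ) * nu ≠ 0 := ne_of_gt hden
    have hd2 : (0:ℝ) < lam + ((N:ℝ)+1) * nu := by positivity
    have hd2ne : lam + ((N:ℝ)+1) * nu ≠ 0 := ne_of_gt hd2
    have hSval : S = (A - B) * (lam + (N:ℝ) * nu) / (A * lam) - 1 := by
      field_simp at ih' ⊢
      linarith [ih']
    push_cast
    rw [hSval]
    field_simp
    ring

/-- The homogeneous contraction-factor identity for `Φ_N`, and the bound `Φ_N < 1`. -/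
theorem homogeneous_phi_identity (lam nu : ℝ) (hlam : 0 < lam) (hnu : 0 < nu)
    (N : ℕ) (hN : 2 ≤ N) :
    (lam / (lam + (N : ℝ) * nu)) *
        ((∑ q ∈ Finset.Icc 2 N, ∏ j ∈ Finset.Icc q N,
            ((j : ℝ) * nu) / (lam + ((j - 1 : ℕ) : ℝ) * nu)) + 1) =
      ((∏ j ∈ Finset.Icc 1 N, (lam + (j : ℝ) * nu)) - ∏ j ∈ Finset.Icc 1 N, ((j : ℝ) * nu)) /
        (∏ j ∈ Finset.Icc 1 N, (lam + (j : ℝ) * nu)) ∧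
    ((∏ j ∈ Finset.Icc 1 N, (lam + (j : ℝ) * nu)) - ∏ j ∈ Finset.Icc 1 N, ((j : ℝ) * nu)) /
        (∏ j ∈ Finset.Icc 1 N, (lam + (j : ℝ) * nu)) < 1 := by
  have hA : (0:ℝ) < ∏ j ∈ Finset.Icc 1 N, (lam + (j : ℝ) * nu) := by
    apply Finset.prod_pos; intro j hj; positivity
  have hB : (0:ℝ) < ∏ j ∈ Finset.Icc 1 N, ((j : ℝ) * nu) := by
    apply Finset.prod_pos; intro j hj
    simp only [Finset.mem_Icc] at hj
    have : (0:ℝ) < (j:ℝ) := by exact_mod_cast hj.1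
    positivity
  refine ⟨phi_aux lam nu hlam hnu N (by omega), ?_⟩
  rw [div_lt_one hA]
  linarith
end

section
/- (Key induction of the proof of Theorem 1: layer-wise contraction.) Suppose given nonnegative real numbers M_{k,n} for all integers k ≥ 1 and 0 ≤ n ≤ N, such that M_{k,0} = M_{k,N} = 0 for all k, and such that for all k ≥ 1 and all 1 ≤ n ≤ N−1: M_{k+1,n} ≤ (μ̄_n·M_{k+1,n−1} + γ_{n+1}·λ·M_{k,n+1})/(λ + μ̲_n). Then for all k ≥ 1 and all 1 ≤ n ≤ N−1: M_{k+1,n} ≤ Φ_n·max_{0≤j≤N} M_{k,j}. -/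
/-!
Fix `k` and let `S = max_j M_{k,j}`. Induct on `n`: the recursive bound combines the estimate
already obtained for `M_{k+1,n-1}` with the crude bound `M_{k,n+1} ≤ S`, and the factors satisfy
exactly the resulting recursion `Φ_{n+1} = (μ̄_{n+1} Φ_n + γ_{n+2} λ) / (λ + μ̲_{n+1})`;
`Φ_1` comes from `M_{k+1,0} = 0`.
-/

open Finset

/-- The contraction factors `Φ_n` built from the layer bounds `μ̲` (`mlow`) and `μ̄` (`mbar`);
for `n = 1` the sum below is empty, recovering `Φ_1 = (λ/(λ+μ̲_1))·γ_2`. -/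
noncomputable def PhiA (lam : ℝ) (mlow mbar : ℕ → ℝ) (n : ℕ) : ℝ :=
  (lam / (lam + mlow n)) *
    ((∑ q ∈ Finset.Icc 2 n, (mbar q / mlow q) *
        ∏ j ∈ Finset.Icc q n, mbar j / (lam + mlow (j - 1))) +
      mbar (n + 1) / mlow (n + 1))

lemma PhiA_one (lam : ℝ) (mlow mbar : ℕ → ℝ) :
    PhiA lam mlow mbar 1 = (mbar 2 / mlow 2 * lam) / (lam + mlow 1) := by
  simp only [PhiA, Icc_eq_empty (by omega : ¬2 ≤ 1), sum_empty, zero_add]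
  ring

lemma PhiA_succ (lam : ℝ) (mlow mbar : ℕ → ℝ) {m : ℕ} (hm : 1 ≤ m) :
    PhiA lam mlow mbar (m + 1) =
      (mbar (m + 1) * PhiA lam mlow mbar m + mbar (m + 2) / mlow (m + 2) * lam) /
        (lam + mlow (m + 1)) := by
  have hprod : ∀ q ∈ Icc 2 m,
      mbar q / mlow q * ∏ j ∈ Icc q (m + 1), mbar j / (lam + mlow (j - 1)) =
        (mbar q / mlow q * ∏ j ∈ Icc q m, mbar j / (lam + mlow (j - 1))) *
          (mbar (m + 1) / (lam + mlow m)) := by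
    intro q hq
    rw [prod_Icc_succ_top (by grind), Nat.add_sub_cancel]
    ring
  rw [PhiA, sum_Icc_succ_top (by omega), sum_congr rfl hprod, ← sum_mul, Icc_self,
    prod_singleton, Nat.add_sub_cancel, PhiA]
  ring

lemma mul_add_mul_div_le_div_mul {a b d x y Φ S : ℝ} (ha : 0 ≤ a) (hb : 0 ≤ b) (hd : 0 ≤ d)
    (hx : x ≤ Φ * S) (hy : y ≤ S) :
    (a * x + b * y) / d ≤ (a * Φ + b) / d * S :=
  calc (a * x + b * y) / d ≤ (a * (Φ * S) + b * S) / d := by gcongr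
    _ = (a * Φ + b) / d * S := by ring

theorem layerwise_contraction_general (N : ℕ) (lam : ℝ) (hlam : 0 < lam)
    (mlow mbar : ℕ → ℝ)
    (hpos : ∀ n, 1 ≤ n → n ≤ N → 0 < mlow n)
    (hle : ∀ n, 1 ≤ n → n ≤ N → mlow n ≤ mbar n)
    (M : ℕ → ℕ → ℝ)
    (hM0 : ∀ k, 1 ≤ k → M k 0 = 0)
    (hrec : ∀ k, 1 ≤ k → ∀ n, 1 ≤ n → n ≤ N - 1 →
      M (k + 1) n ≤
        (mbar n * M (k + 1) (n - 1) + (mbar (n + 1) / mlow (n + 1)) * lam * M k (n + 1)) /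
          (lam + mlow n)) :
    ∀ k, 1 ≤ k → ∀ n, 1 ≤ n → n ≤ N - 1 →
      M (k + 1) n ≤
        PhiA lam mlow mbar n *
          (Finset.range (N + 1)).sup' Finset.nonempty_range_add_one (M k) := by
  intro k hk n hn hnN
  set S := (range (N + 1)).sup' nonempty_range_add_one (M k)
  have hS : ∀ j ≤ N, M k j ≤ S := fun j hj => le_sup' (M k) (mem_range.mpr (by omega))
  have hmbar : ∀ n, 1 ≤ n → n ≤ N → 0 ≤ mbar n := fun n h1 h2 =>
    (hpos n h1 h2).le.trans (hle n h1 h2)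
  have hγlam : ∀ n, 1 ≤ n → n ≤ N → 0 ≤ mbar n / mlow n * lam := fun n h1 h2 =>
    mul_nonneg (div_nonneg (hmbar n h1 h2) (hpos n h1 h2).le) hlam.le
  have hden : ∀ n, 1 ≤ n → n ≤ N → 0 ≤ lam + mlow n := fun n h1 h2 =>
    (add_pos hlam (hpos n h1 h2)).le
  induction n, hn using Nat.le_induction with
  | base =>
    refine (hrec k hk 1 le_rfl hnN).trans ((mul_add_mul_div_le_div_mul (Φ := 0)
      (hmbar 1 le_rfl (by omega)) (hγlam 2 (by norm_num) (by omega)) (hden 1 le_rfl (by omega))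
      (((hM0 (k + 1) (by omega)).trans (zero_mul S).symm).le) (hS 2 (by omega))).trans_eq ?_)
    rw [PhiA_one, mul_zero, zero_add]
  | succ m hm ih =>
    refine (hrec k hk (m + 1) (by omega) hnN).trans ((mul_add_mul_div_le_div_mul
      (hmbar (m + 1) (by omega) (by omega)) (hγlam (m + 2) (by omega) (by omega))
      (hden (m + 1) (by omega) (by omega)) (ih (by omega)) (hS (m + 2) (by omega))).trans_eq ?_)
    rw [PhiA_succ lam mlow mbar hm]

/-- Key induction in the proof of Theorem 1: layer-wise contraction. -/
theorem layerwise_contraction (N : ℕ) (hN : 2 ≤ N) (lam : ℝ) (hlam : 0 < lam)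
    (mlow mbar : ℕ → ℝ)
    (hpos : ∀ n, 1 ≤ n → n ≤ N → 0 < mlow n)
    (hle : ∀ n, 1 ≤ n → n ≤ N → mlow n ≤ mbar n)
    (M : ℕ → ℕ → ℝ)
    (hMnonneg : ∀ k, 1 ≤ k → ∀ n ≤ N, 0 ≤ M k n)
    (hM0 : ∀ k, 1 ≤ k → M k 0 = 0)
    (hMN : ∀ k, 1 ≤ k → M k N = 0)
    (hrec : ∀ k, 1 ≤ k → ∀ n, 1 ≤ n → n ≤ N - 1 →
      M (k + 1) n ≤
        (mbar n * M (k + 1) (n - 1) + (mbar (n + 1) / mlow (n + 1)) * lam * M k (n + 1)) /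
          (lam + mlow n)) :
    ∀ k, 1 ≤ k → ∀ n, 1 ≤ n → n ≤ N - 1 →
      M (k + 1) n ≤
        PhiA lam mlow mbar n *
          (Finset.range (N + 1)).sup' Finset.nonempty_range_add_one (M k) :=
  layerwise_contraction_general N lam hlam mlow mbar hpos hle M hM0 hrec
end

section
/- (Inner-loop contraction, abstract form of the key estimate in the proof of Lemma 3.1.) Suppose Δ^r : S → ℝ (r = 1, 2, …) satisfy, for all r ≥ 2 and all m ∈ S, the recursion (λ + a(m))·Δ^r(m) = c(m)·Σ_{m'∈S} a(m')·Δ^{r−1}(m'). Then the double series Σ_{r=1}^{∞} Σ_{m∈S} |Δ^r(m)| converges (it is bounded by Σ_{m∈S}(λ+a(m))|Δ^1(m)|/λ plus the first term); in particular Σ_{m∈S} |Δ^r(m)| → 0 as r → ∞. -/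
open Finset

/-- Inner-loop contraction, abstract form of the key estimate in the proof of Lemma 3.1. -/
theorem inner_loop_contraction (S : Type*) [Fintype S] [Nonempty S]
    (lam : ℝ) (hlam : 0 < lam)
    (a : S → ℝ) (ha : ∀ m, 0 ≤ a m)
    (c : S → ℝ) (hc : ∀ m, 0 ≤ c m) (hcsum : ∑ m, c m ≤ 1)
    (Δ : ℕ → S → ℝ)
    (hrec : ∀ r, 2 ≤ r → ∀ m : S,
      (lam + a m) * Δ r m = c m * ∑ m' : S, a m' * Δ (r - 1) m') :
    Summable (fun r : ℕ => ∑ m : S, |Δ (r + 1) m|) ∧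
    (∑' r : ℕ, ∑ m : S, |Δ (r + 1) m|) ≤
      (∑ m : S, (lam + a m) * |Δ 1 m|) / lam + ∑ m : S, |Δ 1 m| ∧
    Filter.Tendsto (fun r => ∑ m : S, |Δ r m|) Filter.atTop (nhds 0) := by
  set s : ℕ → ℝ := fun r => ∑ m : S, |Δ r m| with hs
  set u : ℕ → ℝ := fun r => ∑ m : S, (lam + a m) * |Δ r m| with hu
  have hpos : ∀ m : S, 0 < lam + a m := fun m => by linarith [ha m]
  have hsnn : ∀ r, 0 ≤ s r := fun r => Finset.sum_nonneg fun m _ => abs_nonneg _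
  have hunn : ∀ r, 0 ≤ u r := fun r =>
    Finset.sum_nonneg fun m _ => mul_nonneg (hpos m).le (abs_nonneg _)
  have hcsnn : (0:ℝ) ≤ ∑ m : S, c m := Finset.sum_nonneg fun m _ => hc m
  have key : ∀ r : ℕ, 1 ≤ r → u (r + 1) + lam * s r ≤ u r := by
    intro r hr
    have h1 : ∀ m : S, (lam + a m) * |Δ (r + 1) m| =
        c m * |∑ m' : S, a m' * Δ r m'| := by
      intro m
      have : (lam + a m) * |Δ (r + 1) m| = |(lam + a m) * Δ (r + 1) m| := by
        rw [abs_mul, abs_of_nonneg (hpos m).le]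
      rw [this, hrec (r + 1) (by omega) m]
      simp only [Nat.add_sub_cancel]
      rw [abs_mul, abs_of_nonneg (hc m)]
    have h2 : u (r + 1) = (∑ m : S, c m) * |∑ m' : S, a m' * Δ r m'| := by
      simp only [hu]
      rw [Finset.sum_congr rfl fun m _ => h1 m, ← Finset.sum_mul]
    have h3 : u (r + 1) ≤ |∑ m' : S, a m' * Δ r m'| := by
      rw [h2]
      calc (∑ m : S, c m) * |∑ m' : S, a m' * Δ r m'|
          ≤ 1 * |∑ m' : S, a m' * Δ r m'| :=
            mul_le_mul_of_nonneg_right hcsum (abs_nonneg _)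
        _ = _ := one_mul _
    have h4 : |∑ m' : S, a m' * Δ r m'| ≤ ∑ m' : S, a m' * |Δ r m'| := by
      calc |∑ m' : S, a m' * Δ r m'| ≤ ∑ m' : S, |a m' * Δ r m'| :=
            Finset.abs_sum_le_sum_abs _ _
        _ = ∑ m' : S, a m' * |Δ r m'| := by
            exact Finset.sum_congr rfl fun m _ => by
              rw [abs_mul, abs_of_nonneg (ha m)]
    have h5 : u r = lam * s r + ∑ m' : S, a m' * |Δ r m'| := by
      simp only [hu, hs, Finset.mul_sum, ← Finset.sum_add_distrib]
      exact Finset.sum_congr rfl fun m _ => by ring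
    linarith [h3, h4]
  have hpartial : ∀ N : ℕ, (∑ r ∈ Finset.range N, lam * s (r + 1)) + u (N + 1) ≤ u 1 := by
    intro N
    induction N with
    | zero => simp
    | succ N ih =>
      rw [Finset.sum_range_succ]
      have := key (N + 1) (by omega)
      linarith
  have hbound : ∀ N : ℕ, (∑ r ∈ Finset.range N, s (r + 1)) ≤ u 1 / lam := by
    intro N
    rw [le_div_iff₀ hlam]
    have h := hpartial N
    have hmul : (∑ r ∈ Finset.range N, s (r + 1)) * lam
        = ∑ r ∈ Finset.range N, lam * s (r + 1) := by
      rw [Finset.sum_mul]; exact Finset.sum_congr rfl fun r _ => mul_comm _ _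
    linarith [hunn (N + 1)]
  have hsummable : Summable (fun r : ℕ => s (r + 1)) :=
    summable_of_sum_range_le (fun n => hsnn (n + 1)) hbound
  refine ⟨hsummable, ?_, ?_⟩
  · have h := Summable.tsum_le_of_sum_range_le hsummable hbound
    have : u 1 / lam ≤ u 1 / lam + s 1 := by linarith [hsnn 1]
    exact h.trans this
  · have h := hsummable.tendsto_atTop_zero
    exact (Filter.tendsto_add_atTop_iff_nat 1).mp h
end

section
/- (Inner-loop convergence and limit normalization, abstract form of Lemma 3.1.) Let b : S → ℝ satisfy Σ_{m∈S} b(m) = λ, assume Σ_{m∈S} c(m) = 1, let x^0 : S → ℝ be arbitrary, and define x^r for r ≥ 1 by (λ + a(m))·x^r(m) = c(m)·Σ_{m'∈S} a(m')·x^{r−1}(m') + b(m). Then for each m ∈ S the limit x(m) := lim_{r→∞} x^r(m) exists, and the limit is normalized: Σ_{m∈S} x(m) = 1. -/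
open Finset

/-- Inner-loop convergence and limit normalization, abstract form of Lemma 3.1. -/
theorem inner_loop_limit_normalization (S : Type*) [Fintype S] [Nonempty S]
    (lam : ℝ) (hlam : 0 < lam)
    (a : S → ℝ) (ha : ∀ m, 0 ≤ a m)
    (c : S → ℝ) (hc : ∀ m, 0 ≤ c m) (hcsum : ∑ m, c m = 1)
    (b : S → ℝ) (hb : ∑ m, b m = lam)
    (x : ℕ → S → ℝ)
    (hrec : ∀ r, 1 ≤ r → ∀ m : S,
      (lam + a m) * x r m = c m * (∑ m' : S, a m' * x (r - 1) m') + b m) :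
    ∃ xl : S → ℝ,
      (∀ m : S, Filter.Tendsto (fun r => x r m) Filter.atTop (nhds (xl m))) ∧
      ∑ m : S, xl m = 1 := by
  have hpos : ∀ m : S, 0 < lam + a m := fun m => by
    have := ha m; linarith
  have hne : ∀ m : S, lam + a m ≠ 0 := fun m => (hpos m).ne'
  set T : ℕ → ℝ := fun r => ∑ m' : S, a m' * x r m' with hT
  set α : ℝ := ∑ m : S, c m * (a m / (lam + a m)) with hα
  set β : ℝ := ∑ m : S, a m * b m / (lam + a m) with hβ
  have hx : ∀ r, 1 ≤ r → ∀ m : S, x r m = (c m * T (r - 1) + b m) / (lam + a m) := by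
    intro r hr m
    have h := hrec r hr m
    rw [eq_div_iff (hne m)]
    linear_combination h
  have hTrec : ∀ r, 1 ≤ r → T r = α * T (r - 1) + β := by
    intro r hr
    have : T r = ∑ m : S, a m * ((c m * T (r - 1) + b m) / (lam + a m)) := by
      simp only [hT]
      exact Finset.sum_congr rfl fun m _ => by rw [hx r hr m]
    rw [this, hα, hβ, Finset.sum_mul, ← Finset.sum_add_distrib]
    exact Finset.sum_congr rfl fun m _ => by field_simp
  -- α ∈ [0, 1)
  have hq0 : ∀ m : S, 0 ≤ a m / (lam + a m) := fun m =>
    div_nonneg (ha m) (hpos m).le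
  have hq1 : ∀ m : S, a m / (lam + a m) < 1 := fun m => by
    rw [div_lt_one (hpos m)]; linarith [ha m]
  have hα0 : 0 ≤ α :=
    Finset.sum_nonneg fun m _ => mul_nonneg (hc m) (hq0 m)
  have hα1 : α < 1 := by
    obtain ⟨m₀, -, hm₀⟩ := Finset.exists_max_image (Finset.univ : Finset S)
      (fun m => a m / (lam + a m)) ⟨Classical.arbitrary S, Finset.mem_univ _⟩
    have : α ≤ ∑ m : S, c m * (a m₀ / (lam + a m₀)) := by
      apply Finset.sum_le_sum
      intro m _
      exact mul_le_mul_of_nonneg_left (hm₀ m (Finset.mem_univ m)) (hc m)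
    rw [← Finset.sum_mul, hcsum, one_mul] at this
    exact lt_of_le_of_lt this (hq1 m₀)
  set Ts : ℝ := β / (1 - α) with hTs
  have hαne : 1 - α ≠ 0 := by linarith
  have hTsfix : Ts = α * Ts + β := by
    have h : Ts * (1 - α) = β := div_mul_cancel₀ β hαne
    linear_combination h
  have hgeo : ∀ r : ℕ, T r - Ts = α ^ r * (T 0 - Ts) := by
    intro r
    induction r with
    | zero => simp
    | succ n ih =>
      have h1 : T (n + 1) = α * T n + β := by
        have := hTrec (n + 1) (Nat.le_add_left 1 n)
        simpa using this
      have : T (n + 1) - Ts = α * (T n - Ts) := by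
        rw [h1]
        linear_combination -hTsfix
      rw [this, ih, pow_succ]
      ring
  have hTtend : Filter.Tendsto T Filter.atTop (nhds Ts) := by
    have habs : |α| < 1 := by rw [abs_of_nonneg hα0]; exact hα1
    have h0 : Filter.Tendsto (fun r : ℕ => α ^ r * (T 0 - Ts)) Filter.atTop (nhds 0) := by
      have := tendsto_pow_atTop_nhds_zero_of_abs_lt_one habs
      simpa using this.mul_const (T 0 - Ts)
    have : Filter.Tendsto (fun r => T r - Ts) Filter.atTop (nhds 0) :=
      h0.congr fun r => (hgeo r).symm
    have := this.add_const Ts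
    simpa using this
  set xl : S → ℝ := fun m => (c m * Ts + b m) / (lam + a m) with hxl
  refine ⟨xl, ?_, ?_⟩
  · intro m
    have h1 : Filter.Tendsto (fun r : ℕ => (c m * T r + b m) / (lam + a m))
        Filter.atTop (nhds (xl m)) := by
      apply Filter.Tendsto.div_const
      exact ((hTtend.const_mul (c m)).add_const (b m))
    have h2 : Filter.Tendsto (fun r : ℕ => (c m * T (r + 1 - 1) + b m) / (lam + a m))
        Filter.atTop (nhds (xl m)) := by
      simpa using h1
    have h3 : Filter.Tendsto (fun r : ℕ => x (r + 1) m) Filter.atTop (nhds (xl m)) := by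
      apply h2.congr
      intro r
      exact (hx (r + 1) (Nat.le_add_left 1 r) m).symm
    exact (Filter.tendsto_add_atTop_iff_nat 1).mp h3
  · -- normalization
    have haxl : ∑ m : S, a m * xl m = Ts := by
      have : ∑ m : S, a m * xl m = α * Ts + β := by
        rw [hα, hβ, Finset.sum_mul, ← Finset.sum_add_distrib]
        exact Finset.sum_congr rfl fun m _ => by
          simp only [hxl]; field_simp
      rw [this, ← hTsfix]
    have hfull : ∑ m : S, (lam + a m) * xl m = Ts + lam := by
      have h1 : ∀ m : S, (lam + a m) * xl m = c m * Ts + b m := fun m => by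
        simp only [hxl]; rw [mul_comm, div_mul_cancel₀ _ (hne m)]
      calc ∑ m : S, (lam + a m) * xl m = ∑ m : S, (c m * Ts + b m) :=
            Finset.sum_congr rfl fun m _ => h1 m
        _ = (∑ m : S, c m) * Ts + ∑ m : S, b m := by
            rw [Finset.sum_add_distrib, Finset.sum_mul]
        _ = Ts + lam := by rw [hcsum, hb, one_mul]
    have hsplit : ∑ m : S, (lam + a m) * xl m
        = lam * ∑ m : S, xl m + ∑ m : S, a m * xl m := by
      rw [Finset.mul_sum, ← Finset.sum_add_distrib]
      exact Finset.sum_congr rfl fun m _ => by ring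
    have : lam * ∑ m : S, xl m = lam := by
      rw [hsplit, haxl] at hfull; linarith
    have := mul_left_cancel₀ hlam.ne' (this.trans (mul_one lam).symm)
    exact this
end
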